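/- Let k ≥ 1 and ξ ∈ ℝ^{2n} with ξ orthogonal to V_{k−1}. Then as t → 0⁺ the short-time expansion ξ·D_t ξ = [((F^T)^k ξ)·M((F^T)^k ξ) / ((2k+1)(k!)²)] · t^{2k+1} + O(t^{2k+2}) holds (i.e. there exist C, t₀ > 0 bounding the remainder by C t^{2k+2} for 0 ≤ t ≤ t₀). -/

import Mathlib

open Matrix MeasureTheory intervalIntegral
open Asymptotics Filter Topology NormedSpace Finset
open scoped Interval

/-!
Put `w(s) = R_sᵀ ξ = exp (s Aᵀ) ξ`, so that `ξ · D_t ξ = ∫₀ᵗ w(s) · M w(s) ds`.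
Orthogonality of `ξ` to `V_{k-1}` says that `(Fᵀ)ʲ ξ` is orthogonal to every `Re l_κ`, `Im l_κ`
for `j < k`; such vectors are killed by `M` and by `Nᵀ`, so `(Aᵀ)ʲ ξ = (Fᵀ)ʲ ξ` for `j ≤ k`, and
the degree-`k` Taylor polynomial `p(s)` of `w(s)` satisfies `M p(s) = (sᵏ / k!) M (Fᵀ)ᵏ ξ`.
As `w(s) - p(s) = O(sᵏ⁺¹)`, the integrand is `(sᵏ / k!)² (Fᵀ)ᵏξ · M (Fᵀ)ᵏξ + O(s²ᵏ⁺¹)`,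
and integrating gives the expansion.
-/

theorem isBigO_exp_smul_sub_sum_range {𝔸 : Type*} [NormedRing 𝔸] [NormedAlgebra ℝ 𝔸]
    [CompleteSpace 𝔸] (B : 𝔸) (n : ℕ) :
    (fun s : ℝ => exp (s • B) - ∑ j ∈ range n, (s ^ j / j.factorial) • B ^ j)
      =O[𝓝 0] fun s => s ^ n := by
  have hTaylor := (hasFPowerSeriesAt_exp_zero_of_radius_pos
    (expSeries_radius_pos ℝ 𝔸)).isBigO_sub_partialSum_pow n
  have hB : Tendsto (fun s : ℝ => s • B) (𝓝 0) (𝓝 0) := by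
    simpa using (tendsto_id (x := 𝓝 (0 : ℝ))).smul_const B
  refine ((hTaylor.comp_tendsto hB).congr_left fun s => ?_).trans
    (isBigO_of_le' (c := ‖B‖ ^ n) _ fun s => ?_)
  · simp [FormalMultilinearSeries.partialSum, expSeries_apply_eq, smul_pow, smul_smul,
      div_eq_inv_mul]
  · simp [norm_smul, mul_pow, mul_comm]

theorem Asymptotics.IsBigO.dotProduct {α ι : Type*} [Fintype ι] {l : Filter α}
    {a b : α → ι → ℝ} {f g : α → ℝ} (ha : a =O[l] f) (hb : b =O[l] g) :
    (fun x => a x ⬝ᵥ b x) =O[l] fun x => f x * g x :=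
  IsBigO.fun_sum fun i _ => ((isBigO_pi.mp ha) i).mul ((isBigO_pi.mp hb) i)

open scoped Matrix.Norms.Operator in
theorem Asymptotics.IsBigO.const_mulVec {α ι κ : Type*} [Fintype ι] [Fintype κ] {l : Filter α}
    (M : Matrix κ ι ℝ) {e : α → ι → ℝ} {g : α → ℝ} (he : e =O[l] g) :
    (fun x => M *ᵥ e x) =O[l] g :=
  (isBigO_of_le' (c := ‖M‖) l fun x => linfty_opNorm_mulVec M (e x)).trans he

theorem Matrix.IsSymm.dotProduct_mulVec_comm {ι : Type*} [Fintype ι] {M : Matrix ι ι ℝ}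
    (hM : M.IsSymm) (v w : ι → ℝ) : v ⬝ᵥ M *ᵥ w = M *ᵥ v ⬝ᵥ w := by
  rw [dotProduct_mulVec, ← mulVec_transpose, hM.eq]

theorem isBigO_add_dotProduct_mulVec_add_sub {α ι : Type*} [Fintype ι] {l : Filter α}
    {M : Matrix ι ι ℝ} (hM : M.IsSymm) {p e : α → ι → ℝ} {f g : α → ℝ}
    (hp : (fun x => M *ᵥ p x) =O[l] f) (he : e =O[l] g) (hgf : g =O[l] f) :
    (fun x => (p x + e x) ⬝ᵥ M *ᵥ (p x + e x) - p x ⬝ᵥ M *ᵥ p x) =O[l] fun x => f x * g x := by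
  have hexpand : ∀ x, (p x + e x) ⬝ᵥ M *ᵥ (p x + e x) - p x ⬝ᵥ M *ᵥ p x
      = 2 * (M *ᵥ p x ⬝ᵥ e x) + e x ⬝ᵥ M *ᵥ e x := fun x => by
    simp only [mulVec_add, add_dotProduct, dotProduct_add, hM.dotProduct_mulVec_comm (p x),
      dotProduct_comm (e x) (M *ᵥ p x)]
    ring
  simp only [hexpand]
  exact ((hp.dotProduct he).const_mul_left 2).add
    ((he.dotProduct (he.const_mulVec M)).trans (hgf.mul (isBigO_refl g l)))

section MatrixExponential

variable {ι : Type*} [Fintype ι] [DecidableEq ι]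

theorem isBigO_exp_smul_mulVec_sub_sum (B : Matrix ι ι ℝ) (ξ : ι → ℝ) (n : ℕ) :
    (fun s : ℝ => exp (s • B) *ᵥ ξ - ∑ j ∈ range n, (s ^ j / j.factorial) • (B ^ j *ᵥ ξ))
      =O[𝓝 0] fun s => s ^ n := by
  -- factored before the operator norm is opened, so that `exp` keeps the product topology
  have hfactor : ∀ s : ℝ, exp (s • B) *ᵥ ξ - ∑ j ∈ range n, (s ^ j / j.factorial) • (B ^ j *ᵥ ξ)
      = (exp (s • B) - ∑ j ∈ range n, (s ^ j / j.factorial) • B ^ j) *ᵥ ξ := fun s => by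
    simp only [sub_mulVec, sum_mulVec, smul_mulVec]
  open scoped Matrix.Norms.Operator in
  refine (isBigO_of_le' (c := ‖ξ‖) _ fun s => ?_).trans (isBigO_exp_smul_sub_sum_range B n)
  rw [hfactor, mul_comm]
  exact linfty_opNorm_mulVec _ ξ

theorem isBigO_exp_smul_mulVec_dotProduct_mulVec {B M : Matrix ι ι ℝ} (hM : M.IsSymm)
    (ξ : ι → ℝ) {k : ℕ} (hker : ∀ j < k, M *ᵥ (B ^ j *ᵥ ξ) = 0) :
    (fun s : ℝ => exp (s • B) *ᵥ ξ ⬝ᵥ M *ᵥ (exp (s • B) *ᵥ ξ) -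
        (B ^ k *ᵥ ξ ⬝ᵥ M *ᵥ (B ^ k *ᵥ ξ)) / (k.factorial : ℝ) ^ 2 * s ^ (2 * k))
      =O[𝓝 0] fun s => s ^ (2 * k + 1) := by
  set u := B ^ k *ᵥ ξ
  set p : ℝ → ι → ℝ := fun s => ∑ j ∈ range (k + 1), (s ^ j / j.factorial) • (B ^ j *ᵥ ξ)
  have hMp : ∀ s, M *ᵥ p s = (s ^ k / k.factorial) • (M *ᵥ u) := fun s => by
    rw [mulVec_sum, sum_range_succ, sum_eq_zero fun j hj => by
      rw [mulVec_smul, hker j (mem_range.1 hj), smul_zero], zero_add, mulVec_smul]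
  have hpMp : ∀ s, p s ⬝ᵥ M *ᵥ p s = (u ⬝ᵥ M *ᵥ u) / (k.factorial : ℝ) ^ 2 * s ^ (2 * k) :=
    fun s => by
      rw [hMp, dotProduct_smul, hM.dotProduct_mulVec_comm, hMp, smul_dotProduct,
        ← hM.dotProduct_mulVec_comm, smul_eq_mul, smul_eq_mul]
      ring
  have hp : (fun s => M *ᵥ p s) =O[𝓝 0] fun s => s ^ k := by
    refine isBigO_of_le' (c := ‖M *ᵥ u‖) _ fun s => ?_
    rw [hMp, norm_smul, norm_div, mul_comm, RCLike.norm_natCast]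
    gcongr
    exact div_le_self (norm_nonneg _) (mod_cast k.factorial_pos)
  have he : (fun s => exp (s • B) *ᵥ ξ - p s) =O[𝓝 0] fun s => s ^ (k + 1) :=
    isBigO_exp_smul_mulVec_sub_sum B ξ (k + 1)
  have hquad := isBigO_add_dotProduct_mulVec_add_sub hM hp he
    (isLittleO_pow_pow (lt_add_one k)).isBigO
  simp only [add_sub_cancel, hpMp] at hquad
  exact hquad.congr_right fun s => by ring

end MatrixExponential

theorem Asymptotics.IsBigO.intervalIntegral_zero_pow {E : Type*} [NormedAddCommGroup E]
    [NormedSpace ℝ E] {g : ℝ → E} {m : ℕ} (h : g =O[𝓝 0] fun s => s ^ m) :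
    (fun t => ∫ s in (0 : ℝ)..t, g s) =O[𝓝 0] fun t => t ^ (m + 1) := by
  obtain ⟨C, hC, hg⟩ := h.exists_pos
  obtain ⟨δ, hδ, hball⟩ := Metric.eventually_nhds_iff.mp hg.bound
  refine isBigO_iff.2 ⟨C, ?_⟩
  filter_upwards [Metric.ball_mem_nhds (0 : ℝ) hδ] with t ht
  have hle : ∀ s ∈ Ι 0 t, ‖g s‖ ≤ C * ‖t ^ m‖ := fun s hs => by
    have hst : |s| ≤ |t| := by
      simpa using Set.abs_sub_left_of_mem_uIcc (Set.uIoc_subset_uIcc hs)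
    calc ‖g s‖ ≤ C * ‖s ^ m‖ := hball (by simpa using hst.trans_lt (by simpa using ht))
      _ ≤ C * ‖t ^ m‖ := by simp only [norm_pow, Real.norm_eq_abs]; gcongr
  calc ‖∫ s in (0 : ℝ)..t, g s‖ ≤ C * ‖t ^ m‖ * |t - 0| := norm_integral_le_of_norm_le_const hle
    _ = C * ‖t ^ (m + 1)‖ := by simp [pow_succ, mul_assoc]

theorem dotProduct_of_intervalIntegral_mulVec {ι : Type*} [Fintype ι] {X : ℝ → Matrix ι ι ℝ}
    {a b : ℝ} (hX : ∀ i j, IntervalIntegrable (fun s => X s i j) volume a b) (u v : ι → ℝ) :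
    u ⬝ᵥ (of fun i j => ∫ s in a..b, X s i j) *ᵥ v = ∫ s in a..b, u ⬝ᵥ X s *ᵥ v := by
  have hint : ∀ i j, IntervalIntegrable (fun s => u i * (X s i j * v j)) volume a b :=
    fun i j => ((hX i j).mul_const _).const_mul _
  have hint_row : ∀ i, IntervalIntegrable (fun s => ∑ j, u i * (X s i j * v j)) volume a b :=
    fun i => by simpa only [Finset.sum_fn] using IntervalIntegrable.sum univ fun j _ => hint i j
  simp only [dotProduct, mulVec, of_apply, Finset.mul_sum]
  rw [integral_finsetSum fun i _ => hint_row i]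
  refine Finset.sum_congr rfl fun i _ => ?_
  rw [integral_finsetSum fun j _ => hint i j]
  exact Finset.sum_congr rfl fun j _ => by
    rw [intervalIntegral.integral_const_mul, intervalIntegral.integral_mul_const]

section Gramian

variable {ι : Type*} [Fintype ι] [DecidableEq ι]

open scoped Matrix.Norms.Operator in
theorem continuous_exp_smul (A : Matrix ι ι ℝ) : Continuous fun s : ℝ => exp (s • A) :=
  exp_continuous.comp (continuous_id.smul continuous_const)

theorem dotProduct_gramian_mulVec (A M : Matrix ι ι ℝ) (ξ : ι → ℝ) (t : ℝ) :
    ξ ⬝ᵥ (of fun i j => ∫ s in (0 : ℝ)..t, (exp (s • A) * M * (exp (s • A))ᵀ) i j) *ᵥ ξ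
      = ∫ s in (0 : ℝ)..t, exp (s • Aᵀ) *ᵥ ξ ⬝ᵥ M *ᵥ (exp (s • Aᵀ) *ᵥ ξ) := by
  have hcont : Continuous fun s : ℝ => exp (s • A) * M * (exp (s • A))ᵀ :=
    ((continuous_exp_smul A).matrix_mul continuous_const).matrix_mul
      (continuous_exp_smul A).matrix_transpose
  rw [dotProduct_of_intervalIntegral_mulVec
    (fun i j => (hcont.matrix_elem i j).intervalIntegrable 0 t)]
  refine integral_congr fun s _ => ?_
  rw [← transpose_smul, exp_transpose, ← mulVec_mulVec, ← mulVec_mulVec, dotProduct_mulVec,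
    ← mulVec_transpose]

theorem isBigO_integral_exp_smul_mulVec_dotProduct_mulVec {B M : Matrix ι ι ℝ} (hM : M.IsSymm)
    (ξ : ι → ℝ) {k : ℕ} (hker : ∀ j < k, M *ᵥ (B ^ j *ᵥ ξ) = 0) :
    (fun t => (∫ s in (0 : ℝ)..t, exp (s • B) *ᵥ ξ ⬝ᵥ M *ᵥ (exp (s • B) *ᵥ ξ)) -
        ((B ^ k *ᵥ ξ ⬝ᵥ M *ᵥ (B ^ k *ᵥ ξ)) / ((2 * k + 1) * (k.factorial) ^ 2)) * t ^ (2 * k + 1))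
      =O[𝓝 0] fun t => t ^ (2 * k + 2) := by
  refine (isBigO_exp_smul_mulVec_dotProduct_mulVec hM ξ hker).intervalIntegral_zero_pow.congr_left
    fun t => ?_
  have hw : Continuous fun s : ℝ => exp (s • B) *ᵥ ξ :=
    (continuous_exp_smul B).matrix_mulVec continuous_const
  rw [integral_sub ((hw.dotProduct (continuous_const.matrix_mulVec hw)).intervalIntegrable 0 t)
    (intervalIntegral.intervalIntegrable_pow _ |>.const_mul _),
    intervalIntegral.integral_const_mul, integral_pow]
  push_cast
  field_simp
  ring

end Gramian

theorem exists_pos_bound_of_isBigO_nhds_zero {f : ℝ → ℝ} {m : ℕ}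
    (h : f =O[𝓝 0] fun t => t ^ m) :
    ∃ C t₀ : ℝ, 0 < C ∧ 0 < t₀ ∧ ∀ t, 0 ≤ t → t ≤ t₀ → |f t| ≤ C * t ^ m := by
  obtain ⟨C, hC, hf⟩ := h.exists_pos
  obtain ⟨δ, hδ, hball⟩ := Metric.eventually_nhds_iff.mp hf.bound
  refine ⟨C, δ / 2, hC, half_pos hδ, fun t h0 h1 => ?_⟩
  have ht : dist t 0 < δ := by rw [Real.dist_0_eq_abs, abs_of_nonneg h0]; linarith
  simpa [abs_of_nonneg h0] using hball ht

section RankOne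

variable {ι κ : Type*} [Fintype κ] (a b : κ → ι → ℝ)

theorem isSymm_sum_vecMulVec_self_add :
    (∑ i, (vecMulVec (a i) (a i) + vecMulVec (b i) (b i))).IsSymm := by
  simp [IsSymm, transpose_sum]

variable [Fintype ι] {a b} {v : ι → ℝ}

theorem sum_vecMulVec_self_add_mulVec_eq_zero (ha : ∀ i, v ⬝ᵥ a i = 0)
    (hb : ∀ i, v ⬝ᵥ b i = 0) :
    (∑ i, (vecMulVec (a i) (a i) + vecMulVec (b i) (b i))) *ᵥ v = 0 := by
  simp [sum_mulVec, add_mulVec, vecMulVec_mulVec, dotProduct_comm _ v, ha, hb]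

theorem vecMul_sum_vecMulVec_sub_eq_zero (ha : ∀ i, v ⬝ᵥ a i = 0) (hb : ∀ i, v ⬝ᵥ b i = 0) :
    v ᵥ* ∑ i, (vecMulVec (a i) (b i) - vecMulVec (b i) (a i)) = 0 := by
  simp [vecMul_sum, vecMul_sub, vecMul_vecMulVec, ha, hb]

end RankOne

theorem add_pow_mulVec_eq_pow_mulVec {ι R : Type*} [Fintype ι] [DecidableEq ι] [CommSemiring R]
    {B C : Matrix ι ι R} {v : ι → R} {k : ℕ} (hC : ∀ j < k, C *ᵥ (B ^ j *ᵥ v) = 0) :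
    ∀ j ≤ k, (B + C) ^ j *ᵥ v = B ^ j *ᵥ v := by
  intro j hj
  induction j with
  | zero => simp
  | succ j ih =>
    rw [pow_succ', ← mulVec_mulVec, ih (by omega), add_mulVec, hC j (by omega), add_zero,
      mulVec_mulVec, ← pow_succ']

theorem pow_transpose_mulVec_dotProduct_eq_zero {ι : Type*} [Fintype ι] [DecidableEq ι]
    {F : Matrix ι ι ℝ} {V₀ W : Submodule ℝ (ι → ℝ)} {ξ : ι → ℝ} (hξ : ∀ v ∈ W, ξ ⬝ᵥ v = 0)
    {j : ℕ} (hj : V₀.map (F ^ j).mulVecLin ≤ W) {w : ι → ℝ} (hw : w ∈ V₀) :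
    (Fᵀ) ^ j *ᵥ ξ ⬝ᵥ w = 0 := by
  rw [← transpose_pow, mulVec_transpose, ← dotProduct_mulVec]
  exact hξ _ (hj ⟨w, hw, rfl⟩)

theorem short_time_expansion_order_k_general (n K : ℕ)
    (Ω : Matrix (Fin n ⊕ Fin n) (Fin n ⊕ Fin n) ℝ)
    (F : Matrix (Fin n ⊕ Fin n) (Fin n ⊕ Fin n) ℝ)
    (l : Fin K → (Fin n ⊕ Fin n) → ℂ)
    (M : Matrix (Fin n ⊕ Fin n) (Fin n ⊕ Fin n) ℝ)
    (hM : M = ∑ k, (vecMulVec (fun i => (l k i).re) (fun i => (l k i).re)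
                  + vecMulVec (fun i => (l k i).im) (fun i => (l k i).im)))
    (N : Matrix (Fin n ⊕ Fin n) (Fin n ⊕ Fin n) ℝ)
    (hN : N = ∑ k, (vecMulVec (fun i => (l k i).re) (fun i => (l k i).im)
                  - vecMulVec (fun i => (l k i).im) (fun i => (l k i).re)))
    (A : Matrix (Fin n ⊕ Fin n) (Fin n ⊕ Fin n) ℝ) (hA : A = F + N * Ω)
    (V₀ : Submodule ℝ ((Fin n ⊕ Fin n) → ℝ))
    (hV₀ : V₀ = Submodule.span ℝ
      (Set.range (fun k => fun i => (l k i).re) ∪ Set.range (fun k => fun i => (l k i).im)))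
    (V : ℕ → Submodule ℝ ((Fin n ⊕ Fin n) → ℝ))
    (hV : ∀ j : ℕ, V j = ⨆ m ∈ Finset.range (j + 1), Submodule.map (F ^ m).mulVecLin V₀)
    (R : ℝ → Matrix (Fin n ⊕ Fin n) (Fin n ⊕ Fin n) ℝ)
    (hR : ∀ t, R t = NormedSpace.exp (t • A))
    (D : ℝ → Matrix (Fin n ⊕ Fin n) (Fin n ⊕ Fin n) ℝ)
    (hD : ∀ t, D t = Matrix.of fun i j => ∫ s in (0:ℝ)..t, (R s * M * (R s)ᵀ) i j)
    (k : ℕ)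
    (ξ : (Fin n ⊕ Fin n) → ℝ) (hξ : ∀ v ∈ V (k - 1), ξ ⬝ᵥ v = 0) :
    ∃ C t₀ : ℝ, 0 < C ∧ 0 < t₀ ∧ ∀ t : ℝ, 0 ≤ t → t ≤ t₀ →
      |ξ ⬝ᵥ (D t).mulVec ξ -
        ((((Fᵀ) ^ k).mulVec ξ ⬝ᵥ M.mulVec (((Fᵀ) ^ k).mulVec ξ)) /
          ((2 * k + 1) * (Nat.factorial k) ^ 2)) * t ^ (2 * k + 1)| ≤
        C * t ^ (2 * k + 2) := by
  have horth : ∀ j < k, ∀ w ∈ V₀, (Fᵀ) ^ j *ᵥ ξ ⬝ᵥ w = 0 := fun j hj w hw => by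
    refine pow_transpose_mulVec_dotProduct_eq_zero hξ ?_ hw
    rw [hV]
    exact le_iSup₂_of_le j (mem_range.2 (by omega)) le_rfl
  have hre : ∀ j < k, ∀ κ, (Fᵀ) ^ j *ᵥ ξ ⬝ᵥ (fun i => (l κ i).re) = 0 := fun j hj κ =>
    horth j hj _ (hV₀ ▸ Submodule.subset_span (Or.inl ⟨κ, rfl⟩))
  have him : ∀ j < k, ∀ κ, (Fᵀ) ^ j *ᵥ ξ ⬝ᵥ (fun i => (l κ i).im) = 0 := fun j hj κ =>
    horth j hj _ (hV₀ ▸ Submodule.subset_span (Or.inr ⟨κ, rfl⟩))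
  have hpow : ∀ j ≤ k, (Aᵀ) ^ j *ᵥ ξ = (Fᵀ) ^ j *ᵥ ξ := by
    rw [hA, transpose_add]
    refine add_pow_mulVec_eq_pow_mulVec fun j hj => ?_
    rw [mulVec_transpose, ← vecMul_vecMul, hN,
      vecMul_sum_vecMulVec_sub_eq_zero (hre j hj) (him j hj), zero_vecMul]
  have hker : ∀ j < k, M *ᵥ ((Aᵀ) ^ j *ᵥ ξ) = 0 := fun j hj => by
    rw [hpow j hj.le, hM]
    exact sum_vecMulVec_self_add_mulVec_eq_zero (hre j hj) (him j hj)
  have hasymp := isBigO_integral_exp_smul_mulVec_dotProduct_mulVec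
    (hM ▸ isSymm_sum_vecMulVec_self_add _ _) ξ hker
  rw [hpow k le_rfl] at hasymp
  obtain ⟨C, t₀, hC, ht₀, hbound⟩ := exists_pos_bound_of_isBigO_nhds_zero hasymp
  refine ⟨C, t₀, hC, ht₀, fun t h0 h1 => ?_⟩
  rw [hD, funext hR, dotProduct_gramian_mulVec]
  exact hbound t h0 h1

/-- if `ξ ⊥ V_{k-1}` (k ≥ 1), then as `t → 0⁺`,
`ξ·D_t ξ = [((Fᵀ)ᵏξ)·M((Fᵀ)ᵏξ) / ((2k+1)(k!)²)] t^{2k+1} + O(t^{2k+2})`. -/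
theorem short_time_expansion_order_k (n K : ℕ) (hn : 1 ≤ n)
    (Ω : Matrix (Fin n ⊕ Fin n) (Fin n ⊕ Fin n) ℝ)
    (hΩ : Ω = Matrix.fromBlocks 0 (-1) 1 0)
    (Q : Matrix (Fin n ⊕ Fin n) (Fin n ⊕ Fin n) ℝ) (hQ : Q.IsSymm)
    (F : Matrix (Fin n ⊕ Fin n) (Fin n ⊕ Fin n) ℝ) (hF : F = Ω * Q)
    (l : Fin K → (Fin n ⊕ Fin n) → ℂ)
    (M : Matrix (Fin n ⊕ Fin n) (Fin n ⊕ Fin n) ℝ)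
    (hM : M = ∑ k, (vecMulVec (fun i => (l k i).re) (fun i => (l k i).re)
                  + vecMulVec (fun i => (l k i).im) (fun i => (l k i).im)))
    (N : Matrix (Fin n ⊕ Fin n) (Fin n ⊕ Fin n) ℝ)
    (hN : N = ∑ k, (vecMulVec (fun i => (l k i).re) (fun i => (l k i).im)
                  - vecMulVec (fun i => (l k i).im) (fun i => (l k i).re)))
    (A : Matrix (Fin n ⊕ Fin n) (Fin n ⊕ Fin n) ℝ) (hA : A = F + N * Ω)
    (V₀ : Submodule ℝ ((Fin n ⊕ Fin n) → ℝ))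
    (hV₀ : V₀ = Submodule.span ℝ
      (Set.range (fun k => fun i => (l k i).re) ∪ Set.range (fun k => fun i => (l k i).im)))
    (V : ℕ → Submodule ℝ ((Fin n ⊕ Fin n) → ℝ))
    (hV : ∀ j : ℕ, V j = ⨆ m ∈ Finset.range (j + 1), Submodule.map (F ^ m).mulVecLin V₀)
    (R : ℝ → Matrix (Fin n ⊕ Fin n) (Fin n ⊕ Fin n) ℝ)
    (hR : ∀ t, R t = NormedSpace.exp (t • A))
    (D : ℝ → Matrix (Fin n ⊕ Fin n) (Fin n ⊕ Fin n) ℝ)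
    (hD : ∀ t, D t = Matrix.of fun i j => ∫ s in (0:ℝ)..t, (R s * M * (R s)ᵀ) i j)
    (k : ℕ) (hk : 1 ≤ k)
    (ξ : (Fin n ⊕ Fin n) → ℝ) (hξ : ∀ v ∈ V (k - 1), ξ ⬝ᵥ v = 0) :
    ∃ C t₀ : ℝ, 0 < C ∧ 0 < t₀ ∧ ∀ t : ℝ, 0 ≤ t → t ≤ t₀ →
      |ξ ⬝ᵥ (D t).mulVec ξ -
        ((((Fᵀ) ^ k).mulVec ξ ⬝ᵥ M.mulVec (((Fᵀ) ^ k).mulVec ξ)) /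
          ((2 * k + 1) * (Nat.factorial k) ^ 2)) * t ^ (2 * k + 1)| ≤
        C * t ^ (2 * k + 2) :=
  short_time_expansion_order_k_general n K Ω F l M hM N hN A hA V₀ hV₀ V hV R hR D hD k ξ hξ
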